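/- arXiv:0902.1174 — 8 statements merged into one kernel-verified Lean document; each statement's English description precedes it below -/
import Mathlib

section
/- For all upper triangular matrices A, B in M_2(𝕋) (i.e. with (2,1)-entry equal to −∞), the semigroup identity (AB²A)·(AB)·(AB²A) = (AB²A)·(BA)·(AB²A) holds, where all products and powers are tropical matrix products. -/
/-- The tropical semiring `𝕋 = ℝ ∪ {−∞}` (addition = max, multiplication = +,
with `⊥ = −∞` absorbing for `+`). -/
abbrev Trop : Type := WithBot ℝ

/-- Tropical product of 2×2 matrices: `(A⊙B)_{ik} = max_j (a_{ij} + b_{jk})`. -/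
noncomputable def tmul (A B : Matrix (Fin 2) (Fin 2) Trop) : Matrix (Fin 2) (Fin 2) Trop :=
  Matrix.of fun i k => max (A i 0 + B 0 k) (A i 1 + B 1 k)

set_option maxHeartbeats 1000000

lemma addsup (x y z : Trop) : x + (y ⊔ z) = (x + y) ⊔ (x + z) := (max_add_add_left x y z).symm
lemma supadd (x y z : Trop) : (y ⊔ z) + x = (y + x) ⊔ (z + x) := (max_add_add_right y z x).symm

lemma main (a b d p q s : Trop) :
    (tmul (tmul (tmul (tmul !![a,b;⊥,d] (tmul !![p,q;⊥,s] !![p,q;⊥,s])) !![a,b;⊥,d]) (tmul !![a,b;⊥,d] !![p,q;⊥,s]))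
      (tmul (tmul !![a,b;⊥,d] (tmul !![p,q;⊥,s] !![p,q;⊥,s])) !![a,b;⊥,d]) =
    tmul (tmul (tmul (tmul !![a,b;⊥,d] (tmul !![p,q;⊥,s] !![p,q;⊥,s])) !![a,b;⊥,d]) (tmul !![p,q;⊥,s] !![a,b;⊥,d]))
      (tmul (tmul !![a,b;⊥,d] (tmul !![p,q;⊥,s] !![p,q;⊥,s])) !![a,b;⊥,d])) := by
  funext i k
  fin_cases i <;> fin_cases k <;>
    simp only [tmul, Matrix.of_apply, Fin.zero_eta, Fin.mk_one, Fin.isValue,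
      Matrix.cons_val', Matrix.cons_val_zero, Matrix.cons_val_one,
      Matrix.head_cons, Matrix.empty_val', Matrix.cons_val_fin_one, Matrix.head_fin_const,
      WithBot.bot_add, WithBot.add_bot, bot_sup_eq, sup_bot_eq]
  next => abel
  next =>
    simp only [addsup, supadd, sup_assoc]
    simp only [show p + a = a + p from add_comm p a, show s + d = d + s from add_comm s d]
    rcases le_total (a + p) (d + s) with h | h
    · have key1 : ∀ x : Trop, x + (a+p) + (a+p) + (d+s) + (d+s)
          ≤ x + (d+s) + (d+s) + (d+s) + (d+s) := fun x => by gcongr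
      have key2 : ∀ x : Trop, x + (a+p) + (a+p) + (d+s) + (d+s)
          ≤ x + (a+p) + (d+s) + (d+s) + (d+s) := fun x => by gcongr
      apply le_antisymm <;>
        simp only [sup_le_iff] <;>
        simp only [le_sup_iff, le_refl, true_or, or_true, true_and, and_true]
      · constructor
        · iterate 8 right
          left
          exact le_trans (le_of_eq (by abel)) (le_trans (key1 (a+q)) (le_of_eq (by abel)))
        · iterate 9 right
          exact le_trans (le_of_eq (by abel)) (le_trans (key1 (b+s)) (le_of_eq (by abel)))
      · constructor
        · iterate 6 right
          left
          exact le_trans (le_of_eq (by abel)) (le_trans (key2 (p+b)) (le_of_eq (by abel)))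
        · iterate 7 right
          left
          exact le_trans (le_of_eq (by abel)) (le_trans (key2 (q+d)) (le_of_eq (by abel)))
    · have key3 : ∀ x : Trop, x + (a+p) + (a+p) + (d+s) + (d+s)
          ≤ x + (a+p) + (a+p) + (a+p) + (d+s) := fun x => by gcongr
      have key4 : ∀ x : Trop, x + (a+p) + (a+p) + (d+s) + (d+s)
          ≤ x + (a+p) + (a+p) + (a+p) + (a+p) := fun x => by gcongr
      apply le_antisymm <;>
        simp only [sup_le_iff] <;>
        simp only [le_sup_iff, le_refl, true_or, or_true, true_and, and_true]
      · constructor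
        · iterate 2 right
          left
          exact le_trans (le_of_eq (by abel)) (le_trans (key3 (a+q)) (le_of_eq (by abel)))
        · iterate 3 right
          left
          exact le_trans (le_of_eq (by abel)) (le_trans (key3 (b+s)) (le_of_eq (by abel)))
      · constructor
        · left
          exact le_trans (le_of_eq (by abel)) (le_trans (key4 (p+b)) (le_of_eq (by abel)))
        · right
          left
          exact le_trans (le_of_eq (by abel)) (le_trans (key4 (q+d)) (le_of_eq (by abel)))
  next => abel

/-- The submonoid of upper triangular matrices of `M₂(𝕋)` (those with `(2,1)`-entry `−∞`)
satisfies Adjan's identity `(AB²A)(AB)(AB²A) = (AB²A)(BA)(AB²A)`. -/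
theorem stmt1 (A B : Matrix (Fin 2) (Fin 2) Trop)
    (hA : A 1 0 = ⊥) (hB : B 1 0 = ⊥) :
    tmul (tmul (tmul (tmul A (tmul B B)) A) (tmul A B))
      (tmul (tmul A (tmul B B)) A) =
    tmul (tmul (tmul (tmul A (tmul B B)) A) (tmul B A))
      (tmul (tmul A (tmul B B)) A) := by
  have hA' : A = !![A 0 0, A 0 1; ⊥, A 1 1] := by
    funext i j
    fin_cases i <;> fin_cases j <;> simp [hA]
  have hB' : B = !![B 0 0, B 0 1; ⊥, B 1 1] := by
    funext i j
    fin_cases i <;> fin_cases j <;> simp [hB]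
  rw [hA', hB']
  exact main _ _ _ _ _ _
end

section
/- The monoid M_2(𝕋) is a regular semigroup in the sense of Von Neumann: for every A ∈ M_2(𝕋) there exists B ∈ M_2(𝕋) such that A·B·A = A and B·A·B = B (tropical matrix products). -/
/-!
Write `det A = max (a₀₀ + a₁₁) (a₀₁ + a₁₀)` for the tropical permanent and
`adj A = [[a₁₁, a₀₁], [a₁₀, a₀₀]]` for the tropical adjugate. Every entry of `A ⊙ adj A ⊙ A` is
`det A + aᵢₖ` maxed with a term that is `aᵢₖ` plus one of the two products in `det A`, so
`A ⊙ adj A ⊙ A = det A ⊙ A`; as `adj` is an involution preserving `det`, also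
`adj A ⊙ A ⊙ adj A = det A ⊙ adj A`. Hence `(-det A) ⊙ adj A` is a generalized inverse when
`det A` is finite.

When `det A = −∞` and `aᵢⱼ = r` is finite, the entry opposite `aᵢⱼ` is `−∞`, and so is the
product of the two remaining entries. For `B` with `−r` at position `(j, i)` and `−∞`
elsewhere, `(A ⊙ B ⊙ A)_{pq} = a_{pj} − r + a_{iq}`, which is then `a_{pq}` in all four
positions. The matrix with all entries `−∞` is its own generalized inverse.
-/

def IsGenInverse (A B : Matrix (Fin 2) (Fin 2) Trop) : Prop :=
  tmul (tmul A B) A = A ∧ tmul (tmul B A) B = B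

def tsmul (t : Trop) (A : Matrix (Fin 2) (Fin 2) Trop) : Matrix (Fin 2) (Fin 2) Trop :=
  Matrix.of fun i k => t + A i k

def tadj (A : Matrix (Fin 2) (Fin 2) Trop) : Matrix (Fin 2) (Fin 2) Trop :=
  !![A 1 1, A 0 1; A 1 0, A 0 0]

def tdet (A : Matrix (Fin 2) (Fin 2) Trop) : Trop :=
  max (A 0 0 + A 1 1) (A 0 1 + A 1 0)

def tsingle (j i : Fin 2) (s : Trop) : Matrix (Fin 2) (Fin 2) Trop :=
  Matrix.of fun p q => if p = j ∧ q = i then s else ⊥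

section

variable (A B : Matrix (Fin 2) (Fin 2) Trop)

lemma tmul_apply (i k : Fin 2) : tmul A B i k = max (A i 0 + B 0 k) (A i 1 + B 1 k) := rfl

section Scalar

variable (s t : Trop)

lemma tsmul_zero : tsmul 0 A = A := by
  ext i k; simp [tsmul]

lemma tsmul_tsmul : tsmul s (tsmul t A) = tsmul (s + t) A := by
  ext i k; simp [tsmul, add_assoc]

lemma tmul_tsmul_left : tmul (tsmul t A) B = tsmul t (tmul A B) := by
  ext i k; simp only [tmul_apply, tsmul, Matrix.of_apply, add_assoc, max_add_add_left]

lemma tmul_tsmul_right : tmul A (tsmul t B) = tsmul t (tmul A B) := by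
  ext i k; simp only [tmul_apply, tsmul, Matrix.of_apply, add_left_comm _ t, max_add_add_left]

end Scalar

lemma tadj_tadj : tadj (tadj A) = A := by
  ext i k; fin_cases i <;> fin_cases k <;> rfl

lemma tdet_tadj : tdet (tadj A) = tdet A := by
  simp [tdet, tadj, add_comm]

lemma tmul_tadj : tmul A (tadj A) = !![tdet A, A 0 0 + A 0 1; A 1 0 + A 1 1, tdet A] := by
  ext i k
  fin_cases i <;> fin_cases k <;>
    simp [tmul_apply, tadj, tdet, add_comm (A 1 1), add_comm (A 0 1), max_comm (A 1 0 + A 0 1)]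

lemma tmul_tmul_self_tadj_self : tmul (tmul A (tadj A)) A = tsmul (tdet A) A := by
  have h₁ : A 0 0 + A 1 1 ≤ tdet A := le_max_left _ _
  have h₂ : A 0 1 + A 1 0 ≤ tdet A := le_max_right _ _
  rw [tmul_tadj]
  ext i k
  fin_cases i <;> fin_cases k <;>
    simp only [tmul_apply, tsmul, Matrix.of_apply, Matrix.cons_val', Matrix.cons_val_zero,
      Matrix.cons_val_one, Matrix.cons_val_fin_one, Fin.isValue, Fin.zero_eta, Fin.mk_one,
      sup_eq_left, sup_eq_right]
  · calc A 0 0 + A 0 1 + A 1 0 = A 0 1 + A 1 0 + A 0 0 := by abel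
      _ ≤ tdet A + A 0 0 := by gcongr
  · calc A 0 0 + A 0 1 + A 1 1 = A 0 0 + A 1 1 + A 0 1 := by abel
      _ ≤ tdet A + A 0 1 := by gcongr
  · calc A 1 0 + A 1 1 + A 0 0 = A 0 0 + A 1 1 + A 1 0 := by abel
      _ ≤ tdet A + A 1 0 := by gcongr
  · calc A 1 0 + A 1 1 + A 0 1 = A 0 1 + A 1 0 + A 1 1 := by abel
      _ ≤ tdet A + A 1 1 := by gcongr

lemma tmul_tmul_tadj_self_tadj : tmul (tmul (tadj A) A) (tadj A) = tsmul (tdet A) (tadj A) := by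
  simpa only [tadj_tadj, tdet_tadj] using tmul_tmul_self_tadj_self (tadj A)

lemma isGenInverse_tsmul_tadj {r : ℝ} (hr : tdet A = r) :
    IsGenInverse A (tsmul ((-r : ℝ) : Trop) (tadj A)) := by
  have hcancel : ((-r : ℝ) : Trop) + tdet A = 0 := by
    rw [hr, ← WithBot.coe_add, neg_add_cancel, WithBot.coe_zero]
  constructor
  · rw [tmul_tsmul_right, tmul_tsmul_left, tmul_tmul_self_tadj_self, tsmul_tsmul, hcancel,
      tsmul_zero]
  · rw [tmul_tsmul_left, tmul_tsmul_right, tmul_tsmul_left, tmul_tmul_tadj_self_tadj, tsmul_tsmul,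
      tsmul_tsmul, add_assoc, hcancel, add_zero]

lemma tmul_tmul_tsingle_apply (j i : Fin 2) (s : Trop) (p q : Fin 2) :
    tmul (tmul A (tsingle j i s)) B p q = A p j + s + B i q := by
  fin_cases i <;> fin_cases j <;> simp [tmul_apply, tsingle]

lemma tmul_tmul_tsingle_tsingle (j i : Fin 2) (s : Trop) :
    tmul (tmul (tsingle j i s) A) (tsingle j i s) = tsingle j i (s + A i j + s) := by
  ext p q
  fin_cases i <;> fin_cases j <;> fin_cases p <;> fin_cases q <;> simp [tmul_apply, tsingle]

lemma add_eq_bot_of_tdet_eq_bot (h : tdet A = ⊥) {p q p' q' : Fin 2} (hp : p ≠ p')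
    (hq : q ≠ q') : A p q + A p' q' = ⊥ := by
  obtain ⟨hdiag, hanti⟩ := max_eq_bot.mp h
  fin_cases p <;> fin_cases p' <;> fin_cases q <;> fin_cases q' <;>
    simp_all [add_comm]

lemma isGenInverse_tsingle (hdet : tdet A = ⊥) {i j : Fin 2} {r : ℝ} (hr : A i j = r) :
    IsGenInverse A (tsingle j i ((-r : ℝ) : Trop)) := by
  constructor
  · ext p q
    rw [tmul_tmul_tsingle_apply]
    by_cases hp : p = i
    · subst hp
      rw [hr, ← WithBot.coe_add, add_neg_cancel, WithBot.coe_zero, zero_add]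
    by_cases hq : q = j
    · subst hq
      rw [hr, add_assoc, ← WithBot.coe_add, neg_add_cancel, WithBot.coe_zero, add_zero]
    have hpq : A p q + A i j = ⊥ := add_eq_bot_of_tdet_eq_bot A hdet hp hq
    have hcross : A p j + A i q = ⊥ := add_eq_bot_of_tdet_eq_bot A hdet hp (Ne.symm hq)
    rw [hr, WithBot.add_eq_bot, or_iff_left WithBot.coe_ne_bot] at hpq
    rw [add_right_comm, hcross, WithBot.bot_add, hpq]
  · rw [tmul_tmul_tsingle_tsingle, hr, ← WithBot.coe_add, ← WithBot.coe_add, neg_add_cancel,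
      zero_add]

lemma isGenInverse_self_of_forall_eq_bot (h : ∀ i j, A i j = ⊥) : IsGenInverse A A := by
  constructor <;> ext i k <;> simp [tmul_apply, h]

end

/-- `M₂(𝕋)` is a regular semigroup in the sense of Von Neumann: every `A` has a
generalized inverse `B`, i.e. `A⊙B⊙A = A` and `B⊙A⊙B = B`. -/
theorem stmt3 (A : Matrix (Fin 2) (Fin 2) Trop) :
    ∃ B : Matrix (Fin 2) (Fin 2) Trop,
      tmul (tmul A B) A = A ∧ tmul (tmul B A) B = B := by
  by_cases hdet : tdet A = ⊥
  · by_cases hfin : ∃ i j, A i j ≠ ⊥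
    · obtain ⟨i, j, hij⟩ := hfin
      obtain ⟨r, hr⟩ := WithBot.ne_bot_iff_exists.mp hij
      exact ⟨_, isGenInverse_tsingle A hdet hr.symm⟩
    · exact ⟨A, isGenInverse_self_of_forall_eq_bot A (by simpa using hfin)⟩
  · obtain ⟨r, hr⟩ := WithBot.ne_bot_iff_exists.mp hdet
    exact ⟨_, isGenInverse_tsmul_tadj A hr.symm⟩
end

section
/- If A = [[a,b],[c,d]] ∈ M_2(𝕋) has tropical determinant |A| = max(a+d, b+c) equal to −∞, then A has a generalized inverse: there exists B ∈ M_2(𝕋) with A·B·A = A and B·A·B = B. -/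
noncomputable def tneg : Trop → Trop := WithBot.map Neg.neg

@[simp]
lemma tneg_bot : tneg ⊥ = ⊥ := rfl

@[simp]
lemma tneg_coe (x : ℝ) : tneg x = ((-x : ℝ) : Trop) := rfl

@[simp]
lemma tneg_tneg (x : Trop) : tneg (tneg x) = x := by
  induction x using WithBot.recBotCoe <;> simp

lemma tneg_add_self_le_zero (x : Trop) : tneg x + x ≤ 0 := by
  induction x using WithBot.recBotCoe with
  | bot => simp
  | coe x => simp [← WithBot.coe_add]

lemma tneg_add_self_of_ne_bot {x : Trop} (hx : x ≠ ⊥) : tneg x + x = 0 := by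
  lift x to ℝ using hx
  simp [← WithBot.coe_add]

noncomputable def tdot (v w : Fin 2 → Trop) : Trop := max (v 0 + w 0) (v 1 + w 1)

lemma tdot_comm (v w : Fin 2 → Trop) : tdot v w = tdot w v := by
  simp only [tdot, add_comm]

def outer (u v : Fin 2 → Trop) : Matrix (Fin 2) (Fin 2) Trop := Matrix.of fun i k => u i + v k

lemma tmul_outer_outer (u v p q : Fin 2 → Trop) :
    tmul (outer u v) (outer p q) = outer (fun i => u i + tdot v p) q := by
  ext i k
  simp only [tmul, outer, tdot, Matrix.of_apply, ← max_add_add_left, ← max_add_add_right, add_assoc]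

noncomputable def tdotNegSelf (u : Fin 2 → Trop) : Trop := tdot (tneg ∘ u) u

lemma tdotNegSelf_eq_zero {u : Fin 2 → Trop} {i : Fin 2} (hi : u i ≠ ⊥) : tdotNegSelf u = 0 := by
  have hle : ∀ j, tneg (u j) + u j ≤ 0 := fun j => tneg_add_self_le_zero (u j)
  apply le_antisymm (max_le (hle 0) (hle 1))
  fin_cases i
  · exact (tneg_add_self_of_ne_bot hi).symm.le.trans (le_max_left _ _)
  · exact (tneg_add_self_of_ne_bot hi).symm.le.trans (le_max_right _ _)

lemma tdotNegSelf_tneg (u : Fin 2 → Trop) : tdotNegSelf (tneg ∘ u) = tdotNegSelf u := by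
  have htneg : tneg ∘ tneg ∘ u = u := funext fun j => tneg_tneg (u j)
  rw [tdotNegSelf, tdotNegSelf, htneg, tdot_comm]

lemma outer_add_tdotNegSelf (u v : Fin 2 → Trop) :
    outer (fun i => u i + tdotNegSelf v + tdotNegSelf u) v = outer u v := by
  ext i k
  simp only [outer, Matrix.of_apply]
  by_cases hu : u i = ⊥
  · simp [hu]
  by_cases hv : v k = ⊥
  · simp [hv]
  rw [tdotNegSelf_eq_zero hu, tdotNegSelf_eq_zero hv, add_zero, add_zero]

lemma isGenInverse_outer (u v : Fin 2 → Trop) :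
    IsGenInverse (outer u v) (outer (tneg ∘ v) (tneg ∘ u)) := by
  constructor
  · rw [tmul_outer_outer, tmul_outer_outer, tdot_comm v]
    exact outer_add_tdotNegSelf u v
  · rw [tmul_outer_outer, tmul_outer_outer, tdot_comm v]
    have h := outer_add_tdotNegSelf (tneg ∘ v) (tneg ∘ u)
    rwa [tdotNegSelf_tneg, tdotNegSelf_tneg] at h

lemma exists_eq_outer_of_tdet_eq_bot {a b c d : Trop} (hdet : max (a + d) (b + c) = ⊥) :
    ∃ u v, !![a, b; c, d] = outer u v := by
  rw [max_eq_bot, WithBot.add_eq_bot, WithBot.add_eq_bot] at hdet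
  obtain ⟨rfl | rfl, rfl | rfl⟩ := hdet
  · exact ⟨![⊥, 0], ![c, d], by ext i k; fin_cases i <;> fin_cases k <;> simp [outer]⟩
  · exact ⟨![b, d], ![⊥, 0], by ext i k; fin_cases i <;> fin_cases k <;> simp [outer]⟩
  · exact ⟨![a, c], ![0, ⊥], by ext i k; fin_cases i <;> fin_cases k <;> simp [outer]⟩
  · exact ⟨![0, ⊥], ![a, b], by ext i k; fin_cases i <;> fin_cases k <;> simp [outer]⟩

/-- If `A = [[a,b],[c,d]] ∈ M₂(𝕋)` has tropical determinant
`|A| = max (a+d) (b+c) = −∞`, then `A` has a generalized inverse. -/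
theorem stmt4 (a b c d : Trop)
    (hdet : max (a + d) (b + c) = ⊥) :
    ∃ B : Matrix (Fin 2) (Fin 2) Trop,
      tmul (tmul !![a, b; c, d] B) !![a, b; c, d] = !![a, b; c, d] ∧
      tmul (tmul B !![a, b; c, d]) B = B := by
  obtain ⟨u, v, hA⟩ := exists_eq_outer_of_tdet_eq_bot hdet
  rw [hA]
  exact ⟨_, isGenInverse_outer u v⟩
end

section
/- Let A = [[a,b],[c,d]] ∈ M_2(𝕋) with tropical determinant |A| = max(a+d, b+c) ≠ −∞, and define A∇ = [[d − |A|, b − |A|],[c − |A|, a − |A|]] (where (−∞) − |A| = −∞). Then A·A∇·A = A and A∇·A·A∇ = A∇; that is, A∇ is a generalized inverse of A. -/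
theorem tmul_fin_two (a b c d p q s t : Trop) :
    tmul !![a, b; c, d] !![p, q; s, t] =
      !![max (a + p) (b + s), max (a + q) (b + t); max (c + p) (d + s), max (c + q) (d + t)] := by
  ext i j
  fin_cases i <;> fin_cases j <;> rfl

theorem tmul_eq_right_of_diag_zero {x y p q s t : Trop} (hs : x + s ≤ p) (ht : x + t ≤ q)
    (hp : y + p ≤ s) (hq : y + q ≤ t) :
    tmul !![0, x; y, 0] !![p, q; s, t] = !![p, q; s, t] := by
  rw [tmul_fin_two]
  simp only [zero_add, max_eq_left hs, max_eq_left ht, max_eq_right hp, max_eq_right hq]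

section Nabla

variable {a b c d e : Trop}

theorem tmul_nabla (hdet : max (a + d + e) (b + c + e) = 0) :
    tmul !![a, b; c, d] !![d + e, b + e; c + e, a + e] = !![0, a + b + e; c + d + e, 0] := by
  rw [tmul_fin_two]
  ac_nf at hdet ⊢
  simp only [hdet]

theorem nabla_tmul (hdet : max (a + d + e) (b + c + e) = 0) :
    tmul !![d + e, b + e; c + e, a + e] !![a, b; c, d] = !![0, b + d + e; a + c + e, 0] := by
  rw [tmul_fin_two]
  ac_nf at hdet ⊢
  simp only [hdet]

end Nabla

/-- If `A = [[a,b],[c,d]] ∈ M₂(𝕋)` has tropical determinant `|A| = max (a+d) (b+c) = r ≠ −∞`,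
then `A∇ = [[d−r, b−r],[c−r, a−r]]` (tropical division, i.e. subtraction of `r`, with
`−∞ − r = −∞`) is a generalized inverse of `A`: `A⊙A∇⊙A = A` and `A∇⊙A⊙A∇ = A∇`. -/
theorem stmt5 (a b c d : Trop) (r : ℝ)
    (hdet : max (a + d) (b + c) = (r : Trop)) :
    tmul (tmul !![a, b; c, d]
        !![d + ((-r : ℝ) : Trop), b + ((-r : ℝ) : Trop);
           c + ((-r : ℝ) : Trop), a + ((-r : ℝ) : Trop)]) !![a, b; c, d] = !![a, b; c, d] ∧
    tmul (tmul !![d + ((-r : ℝ) : Trop), b + ((-r : ℝ) : Trop);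
           c + ((-r : ℝ) : Trop), a + ((-r : ℝ) : Trop)] !![a, b; c, d])
        !![d + ((-r : ℝ) : Trop), b + ((-r : ℝ) : Trop);
           c + ((-r : ℝ) : Trop), a + ((-r : ℝ) : Trop)] =
      !![d + ((-r : ℝ) : Trop), b + ((-r : ℝ) : Trop);
         c + ((-r : ℝ) : Trop), a + ((-r : ℝ) : Trop)] := by
  set e : Trop := ((-r : ℝ) : Trop)
  have hdet' : max (a + d + e) (b + c + e) = 0 := by
    rw [max_add_add_right, hdet, ← WithBot.coe_add, add_neg_cancel, WithBot.coe_zero]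
  have had (x : Trop) : a + d + e + x ≤ x := add_le_of_nonpos_left (hdet' ▸ le_max_left _ _)
  have hbc (x : Trop) : b + c + e + x ≤ x := add_le_of_nonpos_left (hdet' ▸ le_max_right _ _)
  rw [tmul_nabla hdet', nabla_tmul hdet']
  exact ⟨tmul_eq_right_of_diag_zero ((hbc a).trans_eq' (by ac_rfl)) ((had b).trans_eq' (by ac_rfl))
      ((had c).trans_eq' (by ac_rfl)) ((hbc d).trans_eq' (by ac_rfl)),
    tmul_eq_right_of_diag_zero ((hbc (d + e)).trans_eq' (by ac_rfl))
      ((had (b + e)).trans_eq' (by ac_rfl)) ((had (c + e)).trans_eq' (by ac_rfl))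
      ((hbc (a + e)).trans_eq' (by ac_rfl))⟩
end

section
/- Let F be a finite nonempty index set and for each i ∈ F let g_i : ℝ^m → ℝ be the tropical monomial function g_i(x) = α_i + ⟨n_i, x⟩ with α_i ∈ ℝ and exponents n_i ∈ ℕ^m pairwise distinct, and let f(x) = max_{i ∈ F} g_i(x). Then for every x ∈ ℝ^m there exists an essential index j ∈ F (one for which there is some point y ∈ ℝ^m with g_j(y) > g_i(y) for all i ≠ j) such that f(x) = g_j(x); consequently the pointwise maximum of the essential monomials of f equals f. -/
open Polynomial

/-- `tropMonomial α n x = α + ⟨n, x⟩` is the tropical monomial function on `ℝ^m`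
with coefficient `α ∈ ℝ` and exponent `n ∈ ℕ^m`. -/
def tropMonomial {m : ℕ} (α : ℝ) (n : Fin m → ℕ) (x : Fin m → ℝ) : ℝ :=
  α + ∑ k, (n k : ℝ) * x k

/-- Generic direction: there is `c : ℝ` making the slopes `i ↦ Σ n i k * c^k` injective. -/
lemma exists_generic {m : ℕ} {F : Type} [Fintype F]
    (n : F → Fin m → ℕ) (hdistinct : Function.Injective n) :
    ∃ c : ℝ, Function.Injective (fun i : F => ∑ k, (n i k : ℝ) * c ^ (k : ℕ)) := by
  classical
  set q : F → F → ℝ[X] := fun i j => ∑ k : Fin m, monomial (k : ℕ) ((n i k : ℝ) - n j k)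
    with hq
  have hcoeff : ∀ i j (k : Fin m), (q i j).coeff (k : ℕ) = (n i k : ℝ) - n j k := by
    intro i j k
    rw [hq, finset_sum_coeff, Finset.sum_eq_single k]
    · simp
    · intro b _ hb
      rw [coeff_monomial, if_neg]
      exact fun h => hb (Fin.val_injective h)
    · simp
  have hqne : ∀ i j : F, i ≠ j → q i j ≠ 0 := by
    intro i j hij h0
    apply hij; apply hdistinct; funext k
    have := hcoeff i j k
    rw [h0, coeff_zero] at this
    have : (n i k : ℝ) = n j k := by linarith
    exact_mod_cast this
  have hB : (⋃ p : F × F, {x : ℝ | p.1 ≠ p.2 ∧ (q p.1 p.2).IsRoot x}).Finite := by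
    apply Set.finite_iUnion
    intro p
    by_cases h : p.1 = p.2
    · convert Set.finite_empty
      ext x; simp [h]
    · apply Set.Finite.subset (Polynomial.finite_setOf_isRoot (hqne _ _ h))
      intro x hx; exact hx.2
  obtain ⟨c, hc⟩ := hB.infinite_compl.nonempty
  refine ⟨c, fun i j hij => ?_⟩
  by_contra hne
  apply hc
  refine Set.mem_iUnion.mpr ⟨(i, j), hne, ?_⟩
  have heval : (q i j).eval c = (∑ k, (n i k : ℝ) * c ^ (k : ℕ)) -
      (∑ k, (n j k : ℝ) * c ^ (k : ℕ)) := by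
    rw [hq]
    simp only [eval_finset_sum, eval_monomial]
    rw [← Finset.sum_sub_distrib]
    congr 1; funext k; ring
  simp only [IsRoot, heval]
  simp only at hij
  rw [hij, sub_self]

/-- Let `f` be the pointwise maximum of a finite nonempty family of tropical monomial
functions `g i = α i + ⟨n i, ·⟩` with pairwise distinct exponents.  Then for every
`x ∈ ℝ^m` there is an essential index `j` (one whose monomial strictly dominates all the
others at some point) with `f x = g j x`; hence the maximum of the essential monomials
of `f` defines the same function as `f`. -/
theorem stmt13 {m : ℕ} {F : Type} [Fintype F] [Nonempty F]
    (α : F → ℝ) (n : F → Fin m → ℕ) (hdistinct : Function.Injective n)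
    (f : (Fin m → ℝ) → ℝ)
    (hf : ∀ x, f x = Finset.univ.sup' Finset.univ_nonempty
      (fun i => tropMonomial (α i) (n i) x)) :
    ∀ x : Fin m → ℝ, ∃ j : F,
      (∃ y : Fin m → ℝ, ∀ i : F, i ≠ j →
        tropMonomial (α i) (n i) y < tropMonomial (α j) (n j) y) ∧
      f x = tropMonomial (α j) (n j) x := by
  classical
  intro x
  obtain ⟨c, hc⟩ := exists_generic n hdistinct
  set φ : F → ℝ := fun i => ∑ k, (n i k : ℝ) * c ^ (k : ℕ) with hφ
  set g : F → (Fin m → ℝ) → ℝ := fun i => tropMonomial (α i) (n i) with hg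
  -- translation formula
  have htrans : ∀ (i : F) (s : ℝ),
      g i (fun k => x k + s * c ^ (k : ℕ)) = g i x + s * φ i := by
    intro i s
    simp only [hg, tropMonomial, hφ, Finset.mul_sum]
    rw [add_assoc, ← Finset.sum_add_distrib]
    congr 1
    exact Finset.sum_congr rfl (fun k _ => by ring)
  -- bounds
  have hle : ∀ i : F, g i x ≤ f x := by
    intro i
    rw [hf x]
    exact Finset.le_sup' (fun i => tropMonomial (α i) (n i) x) (Finset.mem_univ i)
  -- set of maximizers
  set S : Finset F := Finset.univ.filter (fun i => g i x = f x) with hS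
  have hSne : S.Nonempty := by
    obtain ⟨i, _, hi⟩ := Finset.exists_mem_eq_sup' (Finset.univ_nonempty (α := F))
      (fun i => tropMonomial (α i) (n i) x)
    exact ⟨i, by simp [hS, hg, (hf x).trans hi]⟩
  obtain ⟨j, hjS, hjmax⟩ := Finset.exists_mem_eq_sup' hSne φ
  have hjx : g j x = f x := (Finset.mem_filter.mp hjS).2
  -- choose step size
  set t : F → ℝ := fun i => if g i x < f x then (f x - g i x) / (|φ i - φ j| + 1) else 1
    with ht
  set T : ℝ := Finset.univ.inf' Finset.univ_nonempty t with hT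
  have hTpos : 0 < T := by
    rw [hT, Finset.lt_inf'_iff]
    intro i _
    simp only [ht]
    split_ifs with h
    · apply div_pos (by linarith) (by positivity)
    · norm_num
  have hTle : ∀ i : F, T ≤ t i := fun i => Finset.inf'_le _ (Finset.mem_univ i)
  refine ⟨j, ⟨fun k => x k + T * c ^ (k : ℕ), fun i hij => ?_⟩, hjx.symm⟩
  show (g i fun k => x k + T * c ^ (k : ℕ)) < g j fun k => x k + T * c ^ (k : ℕ)
  rw [htrans i T, htrans j T]
  have key : T * (φ i - φ j) < f x - g i x := by
    rcases lt_or_eq_of_le (hle i) with h | h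
    · have h1 : T ≤ (f x - g i x) / (|φ i - φ j| + 1) := by
        have h0 := hTle i
        simp only [ht, if_pos h] at h0
        exact h0
      have h2 : (0:ℝ) ≤ |φ i - φ j| := abs_nonneg _
      have h3 : φ i - φ j ≤ |φ i - φ j| := le_abs_self _
      have h4 : T * (φ i - φ j) ≤ T * |φ i - φ j| :=
        mul_le_mul_of_nonneg_left h3 hTpos.le
      have h5 : T * |φ i - φ j| ≤ (f x - g i x) / (|φ i - φ j| + 1) * |φ i - φ j| :=
        mul_le_mul_of_nonneg_right h1 h2
      have h6 : (f x - g i x) / (|φ i - φ j| + 1) * |φ i - φ j| < f x - g i x := by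
        rw [div_mul_eq_mul_div, div_lt_iff₀ (by positivity)]
        nlinarith
      linarith
    · -- i is a maximizer, so φ i < φ j
      have hiS : i ∈ S := Finset.mem_filter.mpr ⟨Finset.mem_univ i, h⟩
      have : φ i ≤ φ j := hjmax ▸ Finset.le_sup' φ hiS
      have hne : φ i ≠ φ j := fun hφeq => hij (hc hφeq)
      have : φ i < φ j := lt_of_le_of_ne this hne
      nlinarith
  linarith [hjx]
end

section
/- Every tropical polynomial function has a unique essential representative: if S and S' are two finite nonempty sets of pairs (α, n) ∈ ℝ × ℕ^m, each with pairwise distinct exponents n, such that every member of S is essential in S and every member of S' is essential in S', and if the pointwise maxima max_{(α,n) ∈ S}(α + ⟨n, x⟩) and max_{(α,n) ∈ S'}(α + ⟨n, x⟩) agree for all x ∈ ℝ^m, then S = S'. -/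
lemma tropMonomial_shift {m : ℕ} (α : ℝ) (n : Fin m → ℕ) (x : Fin m → ℝ) (k : Fin m) (t : ℝ) :
    tropMonomial α n (fun j => x j + if j = k then t else 0)
      = tropMonomial α n x + n k * t := by
  simp only [tropMonomial, mul_add, Finset.sum_add_distrib, mul_ite, mul_zero,
    Finset.sum_ite_eq', Finset.mem_univ, if_true]
  ring

lemma subset_aux {m : ℕ} (S S' : Finset (ℝ × (Fin m → ℕ)))
    (hS : S.Nonempty) (hS' : S'.Nonempty)
    (hessS : ∀ p ∈ S, ∃ x : Fin m → ℝ, ∀ q ∈ S, q ≠ p →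
      tropMonomial q.1 q.2 x < tropMonomial p.1 p.2 x)
    (hfun : ∀ x : Fin m → ℝ,
      S.sup' hS (fun p => tropMonomial p.1 p.2 x) =
      S'.sup' hS' (fun p => tropMonomial p.1 p.2 x)) :
    S ⊆ S' := by
  intro p hp
  obtain ⟨x, hx⟩ := hessS p hp
  obtain ⟨q', hq', hq'eq⟩ := Finset.exists_mem_eq_sup' hS' (fun p => tropMonomial p.1 p.2 x)
  -- the sup over S at x is trop p x
  have hsupS : S.sup' hS (fun p => tropMonomial p.1 p.2 x) = tropMonomial p.1 p.2 x := by
    refine le_antisymm (Finset.sup'_le _ _ fun q hq => ?_) (Finset.le_sup' (fun p => tropMonomial p.1 p.2 x) hp)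
    by_cases hqp : q = p
    · subst hqp; exact le_rfl
    · exact (hx q hq hqp).le
  have heq : tropMonomial q'.1 q'.2 x = tropMonomial p.1 p.2 x := by
    rw [← hq'eq, ← hfun, hsupS]
  -- key perturbation inequality
  have key : ∀ (k : Fin m) (t : ℝ), (∀ q ∈ S, q ≠ p →
      |t| * ((q.2 k : ℝ) + (p.2 k : ℝ)) < tropMonomial p.1 p.2 x - tropMonomial q.1 q.2 x) →
      (q'.2 k : ℝ) * t ≤ (p.2 k : ℝ) * t := by
    intro k t ht
    have h1 : tropMonomial q'.1 q'.2 (fun j => x j + if j = k then t else 0)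
        ≤ S'.sup' hS' (fun p => tropMonomial p.1 p.2
          (fun j => x j + if j = k then t else 0)) :=
      Finset.le_sup' (fun p => tropMonomial p.1 p.2
          (fun j => x j + if j = k then t else 0)) hq'
    rw [← hfun] at h1
    have h2 : S.sup' hS (fun p => tropMonomial p.1 p.2
        (fun j => x j + if j = k then t else 0))
        ≤ tropMonomial p.1 p.2 (fun j => x j + if j = k then t else 0) := by
      refine Finset.sup'_le _ _ fun q hq => ?_
      by_cases hqp : q = p
      · subst hqp; exact le_rfl
      · rw [tropMonomial_shift, tropMonomial_shift]
        have hd := ht q hq hqp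
        have h3 : (q.2 k : ℝ) * t - (p.2 k : ℝ) * t ≤ |t| * ((q.2 k : ℝ) + (p.2 k : ℝ)) := by
          rcases abs_cases t with ⟨h, _⟩ | ⟨h, _⟩ <;>
            nlinarith [Nat.cast_nonneg (α := ℝ) (q.2 k), Nat.cast_nonneg (α := ℝ) (p.2 k)]
        linarith
    have h4 := le_trans h1 h2
    rw [tropMonomial_shift, tropMonomial_shift] at h4
    linarith [heq.ge, heq.le, h4]
  -- choose a small ε > 0 for each coordinate k
  have hnk : q'.2 = p.2 := by
    funext k
    set ε : ℝ := S.inf' hS (fun q => if q = p then 1 else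
      (tropMonomial p.1 p.2 x - tropMonomial q.1 q.2 x) / ((q.2 k : ℝ) + (p.2 k : ℝ) + 1))
      with hε_def
    have hεpos : 0 < ε := by
      rw [hε_def, Finset.lt_inf'_iff]
      intro q hq
      by_cases hqp : q = p
      · simp [hqp]
      · rw [if_neg hqp]
        apply div_pos (by linarith [hx q hq hqp]) (by positivity)
    have hsmall : ∀ (t : ℝ), |t| = ε → ∀ q ∈ S, q ≠ p →
        |t| * ((q.2 k : ℝ) + (p.2 k : ℝ)) < tropMonomial p.1 p.2 x - tropMonomial q.1 q.2 x := by
      intro t htε q hq hqp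
      rw [htε]
      have hle : ε ≤ (tropMonomial p.1 p.2 x - tropMonomial q.1 q.2 x) /
          ((q.2 k : ℝ) + (p.2 k : ℝ) + 1) := by
        have := Finset.inf'_le (b := q)
          (f := fun q => if q = p then 1 else
            (tropMonomial p.1 p.2 x - tropMonomial q.1 q.2 x) / ((q.2 k : ℝ) + (p.2 k : ℝ) + 1)) hq
        rwa [if_neg hqp] at this
      have hden : (0 : ℝ) < (q.2 k : ℝ) + (p.2 k : ℝ) + 1 := by positivity
      have h5 : ε * ((q.2 k : ℝ) + (p.2 k : ℝ) + 1) ≤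
          tropMonomial p.1 p.2 x - tropMonomial q.1 q.2 x := by
        rw [← le_div_iff₀ hden]; exact hle
      nlinarith
    have k1 := key k ε (hsmall ε (abs_of_pos hεpos))
    have k2 := key k (-ε) (hsmall (-ε) (by rw [abs_neg, abs_of_pos hεpos]))
    have : (q'.2 k : ℝ) * ε = (p.2 k : ℝ) * ε := by nlinarith
    have := mul_right_cancel₀ (ne_of_gt hεpos) this
    exact_mod_cast this
  have hα : q'.1 = p.1 := by
    have := heq
    simp only [tropMonomial, hnk] at this
    linarith
  have : p = q' := Prod.ext hα.symm hnk.symm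
  rw [this]; exact hq'

/-- Every tropical polynomial function has a unique essential representative: if `S` and
`S'` are finite nonempty sets of (coefficient, exponent) pairs, each with pairwise distinct
exponents, all of whose members are essential, and if they define the same pointwise-max
function on `ℝ^m`, then `S = S'`. -/
theorem stmt14 {m : ℕ} (S S' : Finset (ℝ × (Fin m → ℕ)))
    (hS : S.Nonempty) (hS' : S'.Nonempty)
    (hdS : ∀ p ∈ S, ∀ q ∈ S, p.2 = q.2 → p = q)
    (hdS' : ∀ p ∈ S', ∀ q ∈ S', p.2 = q.2 → p = q)
    (hessS : ∀ p ∈ S, ∃ x : Fin m → ℝ, ∀ q ∈ S, q ≠ p →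
      tropMonomial q.1 q.2 x < tropMonomial p.1 p.2 x)
    (hessS' : ∀ p ∈ S', ∃ x : Fin m → ℝ, ∀ q ∈ S', q ≠ p →
      tropMonomial q.1 q.2 x < tropMonomial p.1 p.2 x)
    (hfun : ∀ x : Fin m → ℝ,
      S.sup' hS (fun p => tropMonomial p.1 p.2 x) =
      S'.sup' hS' (fun p => tropMonomial p.1 p.2 x)) :
    S = S' := by
  exact Finset.Subset.antisymm
    (subset_aux S S' hS hS' hessS hfun)
    (subset_aux S' S hS' hS hessS' (fun x => (hfun x).symm))
end

section
/- Let g_1, …, g_ℓ (ℓ ≥ 2) be tropical monomial functions on ℝ^m with pairwise distinct exponents, let h_1, …, h_k be tropical monomial functions, and suppose a ∈ ℝ^m satisfies g_1(a) = g_2(a) = ⋯ = g_ℓ(a) > h_i(a) for all 1 ≤ i ≤ k. Then there exist a' ∈ ℝ^m and an index j with 1 < j ≤ ℓ such that g_j(a') > g_i(a') for all i ≠ j and g_j(a') > h_i(a') for all 1 ≤ i ≤ k. -/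
/-!
Since a vector space over an infinite field is not a finite union of hyperplanes, some direction `v`
separates the exponents: the values `⟨n i, v⟩` are pairwise distinct. Replacing `v` by `-v` if
necessary, the strict maximiser `j` of `⟨n i, v⟩` is not `0`. All `g i` agree at `a`, so at
`a + t • v` with `t > 0` the monomial `g j` strictly beats every other `g i`; for small `t` it still
beats every `h i`, by continuity.
-/

open Function Filter Topology

theorem Finite.exists_forall_ne_lt_of_injective {ι β : Type*} [Finite ι] [Nonempty ι]
    [LinearOrder β] {f : ι → β} (hf : Injective f) : ∃ j, ∀ i ≠ j, f i < f j := by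
  obtain ⟨j, hj⟩ := Finite.exists_max f
  exact ⟨j, fun i hij => (hj i).lt_of_ne (hf.ne hij)⟩

theorem exists_injective_dotProduct {ι σ K : Type*} [Finite ι] [Fintype σ] [Field K] [Infinite K]
    {w : ι → σ → K} (hw : Injective w) : ∃ v, Injective fun i => w i ⬝ᵥ v := by
  classical
  obtain ⟨v, hv⟩ := Module.Dual.exists_forall_ne_zero_of_forall_exists
    (fun p : {p : ι × ι // p.1 ≠ p.2} => dotProductEquiv K σ (w p.1.1 - w p.1.2)) fun p => by
      have : dotProductEquiv K σ (w p.1.1 - w p.1.2) ≠ 0 := by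
        rw [ne_eq, LinearEquiv.map_eq_zero_iff, sub_eq_zero]
        exact hw.ne p.2
      simpa using DFunLike.ne_iff.1 this
  refine ⟨v, fun i i' h => by_contra fun hne => hv ⟨(i, i'), hne⟩ ?_⟩
  simpa [sub_dotProduct, sub_eq_zero] using h

theorem exists_dotProduct_lt_of_ne {ι σ K : Type*} [Finite ι] [Nontrivial ι] [Fintype σ]
    [Field K] [LinearOrder K] [IsStrictOrderedRing K] {w : ι → σ → K} (hw : Injective w)
    (i₀ : ι) : ∃ v j, j ≠ i₀ ∧ ∀ i ≠ j, w i ⬝ᵥ v < w j ⬝ᵥ v := by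
  obtain ⟨v, hv⟩ := exists_injective_dotProduct hw
  obtain ⟨j, hj⟩ := Finite.exists_forall_ne_lt_of_injective hv
  by_cases hji₀ : j = i₀
  · subst hji₀
    have hv' : Injective fun i => w i ⬝ᵥ -v := fun i i' h =>
      hv (neg_injective (by simpa only [dotProduct_neg] using h))
    obtain ⟨j', hj'⟩ := Finite.exists_forall_ne_lt_of_injective hv'
    refine ⟨-v, j', ?_, hj'⟩
    rintro rfl
    obtain ⟨i, hij⟩ := exists_ne j'
    exact (hj i hij).not_gt (by simpa only [dotProduct_neg, neg_lt_neg_iff] using hj' i hij)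
  · exact ⟨v, j, hji₀, hj⟩

theorem tropMonomial_add_smul {m : ℕ} (α : ℝ) (n : Fin m → ℕ) (a v : Fin m → ℝ) (t : ℝ) :
    tropMonomial α n (a + t • v) = tropMonomial α n a + t * ((fun k => (n k : ℝ)) ⬝ᵥ v) := by
  simp only [tropMonomial, ← dotProduct.eq_1, dotProduct_add, dotProduct_smul, smul_eq_mul]
  ring

theorem continuous_tropMonomial {m : ℕ} (α : ℝ) (n : Fin m → ℕ) :
    Continuous (tropMonomial α n) := by
  unfold tropMonomial
  fun_prop

/-- If tropical monomials `g 0, …, g (ℓ-1)` (`ℓ = L + 2 ≥ 2`, pairwise distinct exponents)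
all take the same value at `a`, strictly exceeding the values of the monomials
`h 1, …, h k` there, then there are a point `a'` and an index `j ≠ 0` at which `g j`
strictly dominates all the other `g i` and all the `h i`. -/
theorem stmt15 {m L k : ℕ}
    (α : Fin (L + 2) → ℝ) (n : Fin (L + 2) → Fin m → ℕ)
    (hdistinct : Function.Injective n)
    (β : Fin k → ℝ) (p : Fin k → Fin m → ℕ)
    (a : Fin m → ℝ)
    (heq : ∀ i : Fin (L + 2), tropMonomial (α i) (n i) a = tropMonomial (α 0) (n 0) a)
    (hgt : ∀ i : Fin k, tropMonomial (β i) (p i) a < tropMonomial (α 0) (n 0) a) :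
    ∃ (a' : Fin m → ℝ) (j : Fin (L + 2)), j ≠ 0 ∧
      (∀ i : Fin (L + 2), i ≠ j →
        tropMonomial (α i) (n i) a' < tropMonomial (α j) (n j) a') ∧
      (∀ i : Fin k,
        tropMonomial (β i) (p i) a' < tropMonomial (α j) (n j) a') := by
  obtain ⟨v, j, hj0, hv⟩ := exists_dotProduct_lt_of_ne
    (w := fun i k => (n i k : ℝ)) (Nat.cast_injective.comp_left.comp hdistinct) 0
  have hnear : ∀ᶠ x in 𝓝 a, ∀ i, tropMonomial (β i) (p i) x < tropMonomial (α j) (n j) x :=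
    eventually_all.2 fun i => (continuous_tropMonomial _ _).continuousAt.eventually_lt
      (continuous_tropMonomial _ _).continuousAt (by rw [heq j]; exact hgt i)
  have hpath : Tendsto (fun t : ℝ => a + t • v) (𝓝[>] 0) (𝓝 a) :=
    ((continuous_const.add (continuous_id.smul continuous_const)).tendsto' 0 a
      (by simp)).mono_left nhdsWithin_le_nhds
  obtain ⟨t, ht, htpos⟩ := ((hpath.eventually hnear).and self_mem_nhdsWithin).exists
  refine ⟨a + t • v, j, hj0, fun i hij => ?_, ht⟩
  rw [tropMonomial_add_smul, tropMonomial_add_smul, heq i, heq j]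
  exact (add_lt_add_iff_left _).2 (mul_lt_mul_of_pos_left (hv i hij) htpos)
end

section
/- Define ψ : ℕ × ℕ → M_2(𝕋) by ψ(i,j) = [[i − j, i + j],[−∞, j − i]] (entries are real numbers, viewed in 𝕋). Then ψ is injective, and for all (i,j), (h,k) ∈ ℕ × ℕ the tropical matrix product satisfies ψ(i,j)·ψ(h,k) = ψ(i+h−j, k) if j ≤ h, and ψ(i,j)·ψ(h,k) = ψ(i, j−h+k) if j > h. In particular ψ is an injective homomorphism from the monoid (ℕ × ℕ, ∗), where (i,j) ∗ (h,k) = (i+h−j, k) if j ≤ h and (i, j−h+k) if j > h, onto a submonoid of M_2(𝕋) with identity element E = ψ(0,0) = [[0,0],[−∞,0]]. -/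
/-- `ψ(i,j) = [[i − j, i + j],[−∞, j − i]] ∈ M₂(𝕋)` (real entries, viewed in `𝕋`). -/
noncomputable def psi (p : ℕ × ℕ) : Matrix (Fin 2) (Fin 2) Trop :=
  !![(((p.1 : ℝ) - (p.2 : ℝ) : ℝ) : Trop), (((p.1 : ℝ) + (p.2 : ℝ) : ℝ) : Trop);
     (⊥ : Trop), (((p.2 : ℝ) - (p.1 : ℝ) : ℝ) : Trop)]

/-! The matrix `ψ(i,j)` only depends on `i - j` and `i + j`, read off from its first row, which
gives injectivity. In a product of two such upper triangular matrices the diagonal entries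
simply add, while the corner entry is `max (i - j + h + k) (i + j - h + k) = i + k + |h - j|`;
the maximum is attained by the first term when `j ≤ h` and by the second when `h < j`, which is
exactly the case distinction of the bicyclic operation; none of this needs integrality. -/

noncomputable def upperTrop (a b d : ℝ) : Matrix (Fin 2) (Fin 2) Trop :=
  !![(a : Trop), (b : Trop); ⊥, (d : Trop)]

theorem tmul_upperTrop (a b d a' b' d' : ℝ) :
    tmul (upperTrop a b d) (upperTrop a' b' d') =
      upperTrop (a + a') (max (a + b') (b + d')) (d + d') := by
  ext i k
  fin_cases i <;> fin_cases k <;> simp [tmul, upperTrop]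

noncomputable def psiReal (x y : ℝ) : Matrix (Fin 2) (Fin 2) Trop :=
  upperTrop (x - y) (x + y) (y - x)

theorem psi_eq_psiReal (p : ℕ × ℕ) : psi p = psiReal p.1 p.2 := rfl

theorem tmul_psiReal_of_le {x y u v : ℝ} (h : y ≤ u) :
    tmul (psiReal x y) (psiReal u v) = psiReal (x + u - y) v := by
  rw [psiReal, psiReal, tmul_upperTrop, max_eq_left (by linarith), psiReal]
  congr 1 <;> ring

theorem tmul_psiReal_of_ge {x y u v : ℝ} (h : u ≤ y) :
    tmul (psiReal x y) (psiReal u v) = psiReal x (y - u + v) := by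
  rw [psiReal, psiReal, tmul_upperTrop, max_eq_right (by linarith), psiReal]
  congr 1 <;> ring

theorem psiReal_inj {x y u v : ℝ} : psiReal x y = psiReal u v ↔ x = u ∧ y = v := by
  refine ⟨fun hpq => ?_, fun ⟨hxu, hyv⟩ => hxu ▸ hyv ▸ rfl⟩
  have hdiff : x - y = u - v := WithBot.coe_injective (congrFun (congrFun hpq 0) 0)
  have hsum : x + y = u + v := WithBot.coe_injective (congrFun (congrFun hpq 0) 1)
  exact ⟨by linarith, by linarith⟩

theorem psi_injective : Function.Injective psi := by
  intro p q hpq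
  rw [psi_eq_psiReal, psi_eq_psiReal, psiReal_inj] at hpq
  exact Prod.ext (by exact_mod_cast hpq.1) (by exact_mod_cast hpq.2)

/-- `ψ` is injective and transforms the bicyclic operation
`(i,j) ∗ (h,k) = (i+h−j, k)` if `j ≤ h`, `(i, j−h+k)` if `j > h`, into the tropical
matrix product; its image is a submonoid of `M₂(𝕋)` with identity
`E = ψ(0,0) = [[0,0],[−∞,0]]`. -/
theorem stmt17 :
    Function.Injective psi ∧
    (∀ i j h k : ℕ, j ≤ h → tmul (psi (i, j)) (psi (h, k)) = psi (i + h - j, k)) ∧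
    (∀ i j h k : ℕ, h < j → tmul (psi (i, j)) (psi (h, k)) = psi (i, j - h + k)) ∧
    psi (0, 0) = !![(0 : Trop), (0 : Trop); (⊥ : Trop), (0 : Trop)] := by
  refine ⟨psi_injective, fun i j h k hjh => ?_, fun i j h k hhj => ?_, ?_⟩
  · have hcast : ((i + h - j : ℕ) : ℝ) = i + h - j := by
      rw [Nat.cast_sub (by omega)]; push_cast; rfl
    simp only [psi_eq_psiReal, hcast]
    exact tmul_psiReal_of_le (by exact_mod_cast hjh)
  · have hcast : ((j - h + k : ℕ) : ℝ) = j - h + k := by push_cast [hhj.le]; rfl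
    simp only [psi_eq_psiReal, hcast]
    exact tmul_psiReal_of_ge (by exact_mod_cast hhj.le)
  · norm_num [psi]
end
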